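/- The shift-embezzlement computation: with |Γ_d⟩ = (1/√N_d) Σ_{j=1}^{d} |11⟩^{⊗j}|φ⁺⟩^{⊗(d−j)}, the left-shift unitaries map |φ⁺⟩_{AB}⊗|Γ_d⟩ to (1/√N_d) Σ_{j=1}^{d} |11⟩^{⊗j}|φ⁺⟩^{⊗(d−j)}⊗|φ⁺⟩ reinterpreted so that the resulting state equals (1/√N_d) Σ_{j=0}^{d−1} |11⟩_{AB}⊗(|11⟩^{⊗j}|φ⁺⟩^{⊗(d−j−1)}) + (error term), and the inner product ⟨11⊗Γ_d | W(φ⁺⊗Γ_d)⟩ = (N_d − O(√d))/N_d = 1 − O(1/d). -/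

import Mathlib

open scoped BigOperators InnerProductSpace

noncomputable section

/-- The state `|11⟩` on a pair of qubits. -/
def e11 : Fin 2 × Fin 2 → ℂ := fun p => if p = (1, 1) then 1 else 0

/-- The EPR pair `|φ⁺⟩ = (|00⟩ + |11⟩)/√2` on a pair of qubits. -/
def phiPlus : Fin 2 × Fin 2 → ℂ := fun p =>
  if p.1 = p.2 then (1 / Real.sqrt 2 : ℝ) else 0

/-- The (unnormalized) `j`-th term `|11⟩^{⊗j} ⊗ |φ⁺⟩^{⊗(d−j)}` of the embezzling state,
on `d` pairs of qubits. -/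
def gammaTerm (d : ℕ) (j : ℕ) : EuclideanSpace ℂ (Fin d → Fin 2 × Fin 2) :=
  WithLp.toLp 2 (fun f => ∏ i : Fin d, if (i : ℕ) < j then e11 (f i) else phiPlus (f i))

/-- The normalizing constant `N_d`. -/
def embNorm (d : ℕ) : ℝ := ‖∑ j ∈ Finset.Icc 1 d, gammaTerm d j‖ ^ 2

/-- The van Dam–Hayden embezzling state `|Γ_d⟩`. -/
def Gamma (d : ℕ) : EuclideanSpace ℂ (Fin d → Fin 2 × Fin 2) :=
  (1 / Real.sqrt (embNorm d) : ℝ) • ∑ j ∈ Finset.Icc 1 d, gammaTerm d j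

/-- The cyclic left-shift unitary `W = W_{AA'} ⊗ W_{BB'}` on `d+1` qubit-pair
registers. -/
def leftShift (d : ℕ) (ψ : EuclideanSpace ℂ (Fin (d + 1) → Fin 2 × Fin 2)) :
    EuclideanSpace ℂ (Fin (d + 1) → Fin 2 × Fin 2) :=
  WithLp.toLp 2 (fun g => ψ (fun i => g ((finRotate (d + 1)).symm i)))

/-- The state `|φ⁺⟩_{AB} ⊗ |Γ_d⟩_{A'B'}`. -/
def phiPlusGamma (d : ℕ) : EuclideanSpace ℂ (Fin (d + 1) → Fin 2 × Fin 2) :=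
  WithLp.toLp 2 (fun g => phiPlus (g 0) * Gamma d (fun i => g i.succ))

/-- The state `|11⟩_{AB} ⊗ |Γ_d⟩_{A'B'}`. -/
def e11Gamma (d : ℕ) : EuclideanSpace ℂ (Fin (d + 1) → Fin 2 × Fin 2) :=
  WithLp.toLp 2 (fun g => e11 (g 0) * Gamma d (fun i => g i.succ))

/-!
Write `T_j = |11⟩^{⊗j} ⊗ |φ⁺⟩^{⊗(d+1−j)}` on `d+1` pairs. The shift moves the `φ⁺` on `AB` to
the last pair, so `W(φ⁺ ⊗ Γ_d) = N_d^{-1/2} ∑_{j=1}^{d} T_j`, while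
`11 ⊗ Γ_d = N_d^{-1/2} ∑_{j=1}^{d} T_{j+1}`.
The difference telescopes to `N_d^{-1/2} (T_1 − T_{d+1})`, whose squared norm is at most `4 / N_d`.
Both states are unit vectors (tensor products of unit vectors, and `W` permutes coordinates), which
turns this into the bound on `Re⟨·,·⟩`. Finally `N_d ≥ d`: the `T_j` are unit vectors with
nonnegative entries, so their Gram matrix is entrywise nonnegative and `N_d` is at least its trace.
-/

open scoped ComplexOrder

section ProductStates

variable {𝕜 : Type*} [RCLike 𝕜] {ι κ : Type*} [Fintype ι] [Fintype κ]

theorem norm_sq_toLp_prod [DecidableEq ι] (u : ι → κ → 𝕜) :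
    ‖(WithLp.toLp 2 (fun f : ι → κ => ∏ i, u i (f i)) : EuclideanSpace 𝕜 (ι → κ))‖ ^ 2
      = ∏ i, ∑ x, ‖u i x‖ ^ 2 := by
  rw [EuclideanSpace.norm_sq_eq, Fintype.prod_sum]
  simp [norm_prod, Finset.prod_pow]

theorem norm_sq_toLp_cons_mul {n : ℕ} (a : κ → 𝕜) (ψ : EuclideanSpace 𝕜 (Fin n → κ)) :
    ‖(WithLp.toLp 2 (fun g : Fin (n + 1) → κ => a (g 0) * ψ (fun i => g i.succ)) :
        EuclideanSpace 𝕜 (Fin (n + 1) → κ))‖ ^ 2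
      = (∑ x, ‖a x‖ ^ 2) * ‖ψ‖ ^ 2 := by
  rw [EuclideanSpace.norm_sq_eq, EuclideanSpace.norm_sq_eq, Finset.sum_mul_sum,
    ← Fintype.sum_prod_type']
  exact (Fintype.sum_equiv (Fin.consEquiv fun _ => κ) _ _ fun p => by simp [mul_pow]).symm

theorem inner_nonneg_of_forall_nonneg {v w : EuclideanSpace 𝕜 ι} (hv : ∀ i, 0 ≤ v i)
    (hw : ∀ i, 0 ≤ w i) : 0 ≤ ⟪v, w⟫_𝕜 := by
  rw [PiLp.inner_apply]
  refine Finset.sum_nonneg fun i _ => ?_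
  rw [RCLike.inner_apply]
  exact mul_nonneg (hw i) (star_nonneg_iff.mpr (hv i))

end ProductStates

theorem sum_norm_sq_le_norm_sum_sq {𝕜 E α : Type*} [RCLike 𝕜] [NormedAddCommGroup E]
    [InnerProductSpace 𝕜 E] {s : Finset α} (v : α → E)
    (h : ∀ j ∈ s, ∀ k ∈ s, 0 ≤ RCLike.re ⟪v j, v k⟫_𝕜) :
    ∑ j ∈ s, ‖v j‖ ^ 2 ≤ ‖∑ j ∈ s, v j‖ ^ 2 := by
  rw [← inner_self_eq_norm_sq (𝕜 := 𝕜), sum_inner, map_sum]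
  refine Finset.sum_le_sum fun j hj => ?_
  rw [inner_sum, map_sum, ← inner_self_eq_norm_sq (𝕜 := 𝕜)]
  exact Finset.single_le_sum (f := fun k => RCLike.re ⟪v j, v k⟫_𝕜) (h j hj) hj

lemma e11_nonneg (p : Fin 2 × Fin 2) : 0 ≤ e11 p := by
  unfold e11
  split_ifs <;> simp

lemma phiPlus_nonneg (p : Fin 2 × Fin 2) : 0 ≤ phiPlus p := by
  unfold phiPlus
  split_ifs
  · exact Complex.zero_le_real.mpr (by positivity)
  · rfl

lemma sum_norm_e11_sq : ∑ p, ‖e11 p‖ ^ 2 = 1 := by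
  simp [e11, Fintype.sum_prod_type, Fin.sum_univ_two]

lemma sum_norm_phiPlus_sq : ∑ p, ‖phiPlus p‖ ^ 2 = 1 := by
  simp [phiPlus, Fintype.sum_prod_type, Fin.sum_univ_two]
  norm_num

lemma gammaTerm_nonneg (d j : ℕ) (f : Fin d → Fin 2 × Fin 2) : 0 ≤ gammaTerm d j f := by
  rw [gammaTerm, PiLp.toLp_apply]
  refine Finset.prod_nonneg fun i _ => ?_
  split_ifs
  exacts [e11_nonneg _, phiPlus_nonneg _]

lemma norm_gammaTerm (d j : ℕ) : ‖gammaTerm d j‖ = 1 := by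
  have h : ‖gammaTerm d j‖ ^ 2 = 1 :=
    (norm_sq_toLp_prod fun (i : Fin d) p => if (i : ℕ) < j then e11 p else phiPlus p).trans
      (Finset.prod_eq_one fun i _ => by
        split_ifs; exacts [sum_norm_e11_sq, sum_norm_phiPlus_sq])
  exact (pow_eq_one_iff_of_nonneg (norm_nonneg _) two_ne_zero).mp h

lemma embNorm_nonneg (d : ℕ) : 0 ≤ embNorm d := sq_nonneg _

lemma le_embNorm (d : ℕ) : (d : ℝ) ≤ embNorm d := by
  have h := sum_norm_sq_le_norm_sum_sq (𝕜 := ℂ) (s := Finset.Icc 1 d) (gammaTerm d)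
    fun j _ k _ => (RCLike.nonneg_iff.mp
      (inner_nonneg_of_forall_nonneg (gammaTerm_nonneg d j) (gammaTerm_nonneg d k))).1
  simpa [norm_gammaTerm, embNorm] using h

lemma norm_Gamma {d : ℕ} (hd : 0 < embNorm d) : ‖Gamma d‖ = 1 := by
  rw [Gamma, norm_smul, Real.norm_of_nonneg (by positivity), embNorm, Real.sqrt_sq (norm_nonneg _)]
  exact one_div_mul_cancel (sq_pos_iff.mp hd)

lemma norm_e11Gamma_sq {d : ℕ} (hd : 0 < embNorm d) : ‖e11Gamma d‖ ^ 2 = 1 := by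
  rw [e11Gamma, norm_sq_toLp_cons_mul, sum_norm_e11_sq, norm_Gamma hd, one_pow, one_mul]

lemma norm_phiPlusGamma_sq {d : ℕ} (hd : 0 < embNorm d) : ‖phiPlusGamma d‖ ^ 2 = 1 := by
  rw [phiPlusGamma, norm_sq_toLp_cons_mul, sum_norm_phiPlus_sq, norm_Gamma hd, one_pow, one_mul]

lemma norm_leftShift (d : ℕ) (ψ : EuclideanSpace ℂ (Fin (d + 1) → Fin 2 × Fin 2)) :
    ‖leftShift d ψ‖ = ‖ψ‖ :=
  (LinearIsometryEquiv.piLpCongrLeft 2 ℂ ℂ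
    ((finRotate (d + 1)).arrowCongr (Equiv.refl (Fin 2 × Fin 2))).symm).norm_map ψ

lemma e11_mul_gammaTerm (d j : ℕ) (g : Fin (d + 1) → Fin 2 × Fin 2) :
    e11 (g 0) * gammaTerm d j (fun i => g i.succ) = gammaTerm (d + 1) (j + 1) g := by
  simp only [gammaTerm, PiLp.toLp_apply, Fin.prod_univ_succ, Fin.val_zero, Fin.val_succ]
  simp

lemma phiPlus_mul_gammaTerm {d j : ℕ} (hj : j ≤ d) (g : Fin (d + 1) → Fin 2 × Fin 2) :
    phiPlus (g (Fin.last d)) * gammaTerm d j (fun i => g i.castSucc)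
      = gammaTerm (d + 1) j g := by
  simp only [gammaTerm, PiLp.toLp_apply, Fin.prod_univ_castSucc, Fin.val_last, Fin.val_castSucc]
  simp [not_lt.mpr hj, mul_comm]

lemma finRotate_symm_zero (n : ℕ) : (finRotate (n + 1)).symm 0 = Fin.last n :=
  (Equiv.symm_apply_eq _).mpr finRotate_last.symm

lemma finRotate_symm_succ {n : ℕ} (i : Fin n) : (finRotate (n + 1)).symm i.succ = i.castSucc :=
  (Equiv.symm_apply_eq _).mpr (by rw [finRotate_apply, Fin.coeSucc_eq_succ])

lemma e11Gamma_eq (d : ℕ) : e11Gamma d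
    = (1 / Real.sqrt (embNorm d) : ℝ) • ∑ j ∈ Finset.Icc 1 d, gammaTerm (d + 1) (j + 1) := by
  ext g
  simp only [e11Gamma, Gamma, PiLp.smul_apply, PiLp.toLp_apply, WithLp.ofLp_sum,
    Finset.sum_apply, ← e11_mul_gammaTerm, Finset.smul_sum, Finset.mul_sum, mul_smul_comm]

lemma leftShift_phiPlusGamma_eq (d : ℕ) : leftShift d (phiPlusGamma d)
    = (1 / Real.sqrt (embNorm d) : ℝ) • ∑ j ∈ Finset.Icc 1 d, gammaTerm (d + 1) j := by
  ext g
  simp only [leftShift, phiPlusGamma, Gamma, PiLp.smul_apply, PiLp.toLp_apply, WithLp.ofLp_sum,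
    Finset.sum_apply, Finset.smul_sum, Finset.mul_sum, mul_smul_comm, finRotate_symm_zero,
    finRotate_symm_succ]
  exact Finset.sum_congr rfl fun j hj => by rw [phiPlus_mul_gammaTerm (Finset.mem_Icc.mp hj).2]

lemma leftShift_phiPlusGamma_sub_e11Gamma {d : ℕ} (hd : 1 ≤ d) :
    leftShift d (phiPlusGamma d) - e11Gamma d
      = (1 / Real.sqrt (embNorm d) : ℝ) • (gammaTerm (d + 1) 1 - gammaTerm (d + 1) (d + 1)) := by
  rw [leftShift_phiPlusGamma_eq, e11Gamma_eq, ← smul_sub, ← Finset.sum_sub_distrib,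
    ← neg_sub (gammaTerm (d + 1) (d + 1)), ← Finset.sum_Icc_sub hd, ← Finset.sum_neg_distrib]
  simp only [neg_sub]

lemma norm_leftShift_phiPlusGamma_sub_e11Gamma_sq_le {d : ℕ} (hd : 1 ≤ d) :
    ‖leftShift d (phiPlusGamma d) - e11Gamma d‖ ^ 2 ≤ 4 / embNorm d := by
  have hT : ‖gammaTerm (d + 1) 1 - gammaTerm (d + 1) (d + 1)‖ ^ 2 ≤ 4 := by
    calc _ ≤ (‖gammaTerm (d + 1) 1‖ + ‖gammaTerm (d + 1) (d + 1)‖) ^ 2 := by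
          gcongr
          exact norm_sub_le _ _
      _ = 4 := by rw [norm_gammaTerm, norm_gammaTerm]; norm_num
  rw [leftShift_phiPlusGamma_sub_e11Gamma hd, norm_smul, mul_pow,
    Real.norm_of_nonneg (by positivity), div_pow, one_pow, Real.sq_sqrt (embNorm_nonneg d),
    one_div_mul_eq_div]
  exact div_le_div_of_nonneg_right hT (embNorm_nonneg d)

/-- The shift-embezzlement computation: the overlap
`⟨11 ⊗ Γ_d | W(φ⁺ ⊗ Γ_d)⟩ = (N_d − O(√d))/N_d = 1 − O(1/d)`, and consequently
`‖W(|φ⁺⟩ ⊗ |Γ_d⟩) − |11⟩ ⊗ |Γ_d⟩‖² = 2 − 2 Re⟨·,·⟩ = O(1/d)`. -/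
theorem embezzlement_overlap :
    ∃ C > 0, ∀ d : ℕ, 1 ≤ d →
      (embNorm d - C * Real.sqrt d) / embNorm d
          ≤ (⟪e11Gamma d, leftShift d (phiPlusGamma d)⟫_ℂ).re ∧
      1 - C / d ≤ (⟪e11Gamma d, leftShift d (phiPlusGamma d)⟫_ℂ).re ∧
      ‖leftShift d (phiPlusGamma d) - e11Gamma d‖ ^ 2
          = 2 - 2 * (⟪e11Gamma d, leftShift d (phiPlusGamma d)⟫_ℂ).re ∧
      ‖leftShift d (phiPlusGamma d) - e11Gamma d‖ ^ 2 ≤ C / d := by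
  refine ⟨4, by norm_num, fun d hd => ?_⟩
  have hd0 : (0 : ℝ) < d := by exact_mod_cast hd
  have hdN : (d : ℝ) ≤ embNorm d := le_embNorm d
  have hN : 0 < embNorm d := hd0.trans_le hdN
  have hdist : ‖leftShift d (phiPlusGamma d) - e11Gamma d‖ ^ 2
      = 2 - 2 * (⟪e11Gamma d, leftShift d (phiPlusGamma d)⟫_ℂ).re := by
    rw [norm_sub_sq (𝕜 := ℂ), norm_leftShift, norm_phiPlusGamma_sq hN, norm_e11Gamma_sq hN,
      inner_re_symm, RCLike.re_to_complex]
    ring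
  have hle := norm_leftShift_phiPlusGamma_sub_e11Gamma_sq_le hd
  have hNd : 4 / embNorm d ≤ 4 / d := div_le_div_of_nonneg_left (by norm_num) hd0 hdN
  have hNsqrt : 4 / embNorm d ≤ 4 * Real.sqrt d / embNorm d :=
    div_le_div_of_nonneg_right (le_mul_of_one_le_right (by norm_num)
      (Real.one_le_sqrt.mpr (by exact_mod_cast hd))) hN.le
  have hpos : 0 ≤ 4 / embNorm d := by positivity
  refine ⟨?_, ?_, hdist, hle.trans hNd⟩
  · rw [sub_div, div_self hN.ne']
    linarith
  · linarith

end
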